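/- Let n ≥ 3 be an integer and let f : ℝ → ℂ be a continuous function. Then for every R > 0, the integral of the function x ↦ f(x_n) over the ball B(0,R) in ℝⁿ satisfies ∫_{B(0,R)} f(x_n) dx = ω_{n-1} ∫_0^R ρ ∫_{-ρ}^{ρ} f(s) (ρ² − s²)^{(n−3)/2} ds dρ, where x_n denotes the last coordinate of x. -/

import Mathlib

open MeasureTheory Metric intervalIntegral

/-- The Lebesgue volume of the unit ball in `ℝ^k`. -/
noncomputable def unitBallVol (k : ℕ) : ℝ :=
  (volume (ball (0 : EuclideanSpace ℝ (Fin k)) 1)).toReal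

/-- The surface area of the unit sphere in `ℝ^k`, i.e. `ω_k = k · v_k`. -/
noncomputable def sphereArea (k : ℕ) : ℝ := k * unitBallVol k

/-!
Slicing the ball perpendicular to the last axis, the slice at height `s` is an `(n-1)`-ball of
radius `√(R² - s²)`, so the left side equals `∫_{-R}^{R} v_{n-1} (R² - s²)^{(n-1)/2} f(s) ds`.
On the right, exchanging the order of integration over the triangle `|s| ≤ ρ ≤ R` leaves the
inner integral `∫_{|s|}^{R} ρ (ρ² - s²)^{(n-3)/2} dρ = (R² - s²)^{(n-1)/2} / (n-1)`, and
`ω_{n-1} = (n-1) v_{n-1}`.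
-/

section

variable {α β E : Type*} [MeasurableSpace α] [MeasurableSpace β] {μ : Measure α} {ν : Measure β}
  [SFinite μ] [SFinite ν] [NormedAddCommGroup E] [NormedSpace ℝ E] {s : Set (α × β)}
  {F : α × β → E}

theorem setIntegral_prod_eq_integral_setIntegral_left (hs : MeasurableSet s)
    (hF : IntegrableOn F s (μ.prod ν)) :
    ∫ p in s, F p ∂μ.prod ν = ∫ a, ∫ b in Prod.mk a ⁻¹' s, F (a, b) ∂ν ∂μ := by
  rw [← MeasureTheory.integral_indicator hs, integral_prod _ (hF.integrable_indicator hs)]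
  refine integral_congr_ae (.of_forall fun a => ?_)
  exact MeasureTheory.integral_indicator (f := fun b => F (a, b)) (measurable_prodMk_left hs)

theorem setIntegral_prod_eq_integral_setIntegral_right (hs : MeasurableSet s)
    (hF : IntegrableOn F s (μ.prod ν)) :
    ∫ p in s, F p ∂μ.prod ν = ∫ b, ∫ a in (·, b) ⁻¹' s, F (a, b) ∂μ ∂ν := by
  rw [← MeasureTheory.integral_indicator hs, integral_prod_symm _ (hF.integrable_indicator hs)]
  refine integral_congr_ae (.of_forall fun b => ?_)
  exact MeasureTheory.integral_indicator (f := fun a => F (a, b)) (measurable_prodMk_right hs)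

end

theorem integral_integral_swap_triangle {E : Type*} [NormedAddCommGroup E] [NormedSpace ℝ E]
    {K : ℝ → ℝ → E} {R : ℝ} (hR : 0 ≤ R)
    (hK : ContinuousOn (Function.uncurry K) {p : ℝ × ℝ | |p.2| ≤ p.1 ∧ p.1 ≤ R}) :
    ∫ ρ in 0..R, ∫ s in -ρ..ρ, K ρ s = ∫ s in -R..R, ∫ ρ in |s|..R, K ρ s := by
  set S := {p : ℝ × ℝ | |p.2| ≤ p.1 ∧ p.1 ≤ R}
  have hS : IsClosed S :=
    (isClosed_le (by fun_prop) continuous_fst).inter (isClosed_le continuous_fst continuous_const)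
  have hS_sub : S ⊆ Set.Icc 0 R ×ˢ Set.Icc (-R) R := fun p ⟨h₁, h₂⟩ =>
    ⟨⟨(abs_nonneg _).trans h₁, h₂⟩, abs_le.1 (h₁.trans h₂)⟩
  have hint : IntegrableOn (Function.uncurry K) S (volume.prod volume) :=
    hK.integrableOn_compact ((isCompact_Icc.prod isCompact_Icc).of_isClosed_subset hS hS_sub)
  have hleft (ρ : ℝ) : ∫ s in Prod.mk ρ ⁻¹' S, K ρ s =
      (Set.Icc 0 R).indicator (fun ρ => ∫ s in -ρ..ρ, K ρ s) ρ := by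
    by_cases hρ : ρ ∈ Set.Icc 0 R
    · have : Prod.mk ρ ⁻¹' S = Set.Icc (-ρ) ρ := by ext s; simp [S, abs_le, hρ.2]
      rw [this, Set.indicator_of_mem hρ, integral_of_le (by linarith [hρ.1]),
        integral_Icc_eq_integral_Ioc]
    · have : Prod.mk ρ ⁻¹' S = ∅ :=
        Set.eq_empty_of_forall_notMem fun s ⟨h₁, h₂⟩ => hρ ⟨(abs_nonneg _).trans h₁, h₂⟩
      rw [this, Set.indicator_of_notMem hρ, Measure.restrict_empty, integral_zero_measure]
  have hright (s : ℝ) : ∫ ρ in (·, s) ⁻¹' S, K ρ s =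
      (Set.Icc (-R) R).indicator (fun s => ∫ ρ in |s|..R, K ρ s) s := by
    by_cases hs : s ∈ Set.Icc (-R) R
    · rw [Set.indicator_of_mem hs, integral_of_le (abs_le.2 hs), ← integral_Icc_eq_integral_Ioc]
      rfl
    · have : (·, s) ⁻¹' S = ∅ :=
        Set.eq_empty_of_forall_notMem fun ρ ⟨h₁, h₂⟩ => hs (abs_le.1 (h₁.trans h₂))
      rw [this, Set.indicator_of_notMem hs, Measure.restrict_empty, integral_zero_measure]
  calc ∫ ρ in 0..R, ∫ s in -ρ..ρ, K ρ s
      = ∫ p in S, Function.uncurry K p ∂volume.prod volume := by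
        rw [setIntegral_prod_eq_integral_setIntegral_left hS.measurableSet hint]
        simp only [Function.uncurry_apply_pair, hleft]
        rw [MeasureTheory.integral_indicator measurableSet_Icc, integral_of_le hR,
          integral_Icc_eq_integral_Ioc]
    _ = ∫ s in -R..R, ∫ ρ in |s|..R, K ρ s := by
        rw [setIntegral_prod_eq_integral_setIntegral_right hS.measurableSet hint]
        simp only [Function.uncurry_apply_pair, hright]
        rw [MeasureTheory.integral_indicator measurableSet_Icc, integral_of_le (by linarith),
          integral_Icc_eq_integral_Ioc]

theorem integral_mul_sq_sub_sq_rpow {β : ℝ} (hβ : 0 ≤ β) (s R : ℝ) :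
    ∫ ρ in |s|..R, ρ * (ρ ^ 2 - s ^ 2) ^ β = (R ^ 2 - s ^ 2) ^ (β + 1) / (2 * (β + 1)) := by
  have hderiv (ρ : ℝ) : HasDerivAt (fun ρ => (ρ ^ 2 - s ^ 2) ^ (β + 1) / (2 * (β + 1)))
      (ρ * (ρ ^ 2 - s ^ 2) ^ β) ρ := by
    refine ((((hasDerivAt_pow 2 ρ).sub_const (s ^ 2)).rpow_const (p := β + 1)
      (Or.inr (by linarith))).div_const (2 * (β + 1))).congr_deriv ?_
    rw [add_sub_cancel_right]
    field_simp
    ring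
  have hcont : Continuous fun ρ : ℝ => ρ * (ρ ^ 2 - s ^ 2) ^ β := by
    have := Real.continuous_rpow_const hβ
    fun_prop
  rw [integral_eq_sub_of_hasDerivAt (fun ρ _ => hderiv ρ) (hcont.intervalIntegrable _ _), sq_abs,
    sub_self, Real.zero_rpow (by linarith), zero_div, sub_zero]

theorem integral_mul_integral_mul_sq_sub_sq_rpow {f : ℝ → ℂ} (hf : Continuous f) {β : ℝ}
    (hβ : 0 ≤ β) {R : ℝ} (hR : 0 ≤ R) :
    ∫ ρ in 0..R, (ρ : ℂ) * ∫ s in -ρ..ρ, f s * (((ρ ^ 2 - s ^ 2) ^ β : ℝ) : ℂ) =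
      ∫ s in -R..R, f s * (((R ^ 2 - s ^ 2) ^ (β + 1) / (2 * (β + 1)) : ℝ) : ℂ) := by
  have hK : Continuous fun p : ℝ × ℝ =>
      (p.1 : ℂ) * (f p.2 * (((p.1 ^ 2 - p.2 ^ 2) ^ β : ℝ) : ℂ)) := by
    have := Real.continuous_rpow_const hβ
    fun_prop
  simp_rw [← intervalIntegral.integral_const_mul]
  rw [integral_integral_swap_triangle
    (K := fun ρ s => (ρ : ℂ) * (f s * (((ρ ^ 2 - s ^ 2) ^ β : ℝ) : ℂ))) hR hK.continuousOn]
  refine integral_congr fun s _ => ?_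
  calc ∫ ρ in |s|..R, (ρ : ℂ) * (f s * (((ρ ^ 2 - s ^ 2) ^ β : ℝ) : ℂ))
      = ∫ ρ in |s|..R, f s * ((ρ * (ρ ^ 2 - s ^ 2) ^ β : ℝ) : ℂ) :=
        integral_congr fun ρ _ => by push_cast; ring
    _ = _ := by
        rw [intervalIntegral.integral_const_mul, intervalIntegral.integral_ofReal,
          integral_mul_sq_sub_sq_rpow hβ]

namespace EuclideanSpace

noncomputable def splitLast (m : ℕ) :
    EuclideanSpace ℝ (Fin (m + 1)) ≃ᵐ ℝ × EuclideanSpace ℝ (Fin m) :=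
  (MeasurableEquiv.toLp 2 _).symm.trans <|
    (MeasurableEquiv.piFinSuccAbove (fun _ => ℝ) (Fin.last m)).trans <|
      MeasurableEquiv.prodCongr (MeasurableEquiv.refl ℝ) (MeasurableEquiv.toLp 2 _)

theorem measurePreserving_splitLast (m : ℕ) : MeasurePreserving (splitLast m) := by
  rw [Measure.volume_eq_prod]
  exact ((MeasurePreserving.id volume).prod (PiLp.volume_preserving_toLp _)).comp
    ((measurePreserving_piFinSuccAbove (fun _ => volume) (Fin.last m)).comp
      (volume_preserving_symm_measurableEquiv_toLp _))

theorem norm_sq_eq_splitLast (m : ℕ) (x : EuclideanSpace ℝ (Fin (m + 1))) :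
    ‖x‖ ^ 2 = (splitLast m x).1 ^ 2 + ‖(splitLast m x).2‖ ^ 2 := by
  rw [norm_sq_eq, norm_sq_eq, Fin.sum_univ_castSucc]
  simp [splitLast, MeasurableEquiv.prodCongr, add_comm, Fin.init]

theorem measureReal_ball (m : ℕ) (x : EuclideanSpace ℝ (Fin m)) {r : ℝ} (hr : 0 < r) :
    volume.real (ball x r) = unitBallVol m * r ^ m := by
  rw [measureReal_def, Measure.addHaar_ball_of_pos _ _ hr, ENNReal.toReal_mul,
    finrank_euclideanSpace_fin, ENNReal.toReal_ofReal (by positivity), unitBallVol, mul_comm]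

end EuclideanSpace

theorem integral_ball_comp_last {E : Type*} [NormedAddCommGroup E] [NormedSpace ℝ E]
    [CompleteSpace E] (m : ℕ) {g : ℝ → E} (hg : Continuous g) {R : ℝ} (hR : 0 ≤ R) :
    ∫ x in ball (0 : EuclideanSpace ℝ (Fin (m + 1))) R, g (x (Fin.last m)) =
      ∫ s in -R..R, (unitBallVol m * (R ^ 2 - s ^ 2) ^ ((m : ℝ) / 2)) • g s := by
  set B := {p : ℝ × EuclideanSpace ℝ (Fin m) | p.1 ^ 2 + ‖p.2‖ ^ 2 < R ^ 2}
  have hball : ball 0 R = EuclideanSpace.splitLast m ⁻¹' B := by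
    ext x
    rw [mem_ball_zero_iff, ← pow_lt_pow_iff_left₀ (norm_nonneg x) hR two_ne_zero,
      EuclideanSpace.norm_sq_eq_splitLast]
    rfl
  have hB : MeasurableSet B := measurableSet_lt (by fun_prop) measurable_const
  have hB_sub : B ⊆ Set.Icc (-R) R ×ˢ closedBall 0 R := fun p hp => by
    replace hp : p.1 ^ 2 + ‖p.2‖ ^ 2 < R ^ 2 := hp
    exact ⟨abs_le_of_sq_le_sq' (by nlinarith [sq_nonneg ‖p.2‖]) hR, mem_closedBall_zero_iff.2 <|
      (pow_le_pow_iff_left₀ (norm_nonneg _) hR two_ne_zero).1 (by nlinarith [sq_nonneg p.1])⟩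
  have hint : IntegrableOn (fun p : ℝ × EuclideanSpace ℝ (Fin m) => g p.1) B
      (volume.prod volume) :=
    ((hg.comp continuous_fst).continuousOn.integrableOn_compact
      (isCompact_Icc.prod (isCompact_closedBall 0 R))).mono_set hB_sub
  -- `√` of a negative number is `0`, so this also covers the empty slices `|s| ≥ R`.
  have hslice (s : ℝ) : Prod.mk s ⁻¹' B = ball 0 √(R ^ 2 - s ^ 2) := by
    ext z
    rw [mem_ball_zero_iff, Real.lt_sqrt (norm_nonneg z), lt_sub_iff_add_lt']
    rfl
  have hslice_null (s : ℝ) (hs : s ∉ Set.Ioo (-R) R) :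
      volume.real (ball (0 : EuclideanSpace ℝ (Fin m)) √(R ^ 2 - s ^ 2)) = 0 := by
    have : R ^ 2 - s ^ 2 ≤ 0 := by
      rcases not_and_or.1 hs with h | h <;> nlinarith
    rw [Real.sqrt_eq_zero'.2 this, ball_zero, measureReal_empty]
  calc ∫ x in ball (0 : EuclideanSpace ℝ (Fin (m + 1))) R, g (x (Fin.last m))
      = ∫ p in B, g p.1 ∂volume.prod volume := by
        rw [hball, ← Measure.volume_eq_prod]
        exact (EuclideanSpace.measurePreserving_splitLast m).setIntegral_preimage_emb
          (EuclideanSpace.splitLast m).measurableEmbedding (fun p => g p.1) B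
    _ = ∫ s, volume.real (ball (0 : EuclideanSpace ℝ (Fin m)) √(R ^ 2 - s ^ 2)) • g s := by
        rw [setIntegral_prod_eq_integral_setIntegral_left hB hint]
        refine integral_congr_ae (.of_forall fun s => ?_)
        simp only [hslice]
        exact setIntegral_const _
    _ = ∫ s in Set.Ioo (-R) R,
          volume.real (ball (0 : EuclideanSpace ℝ (Fin m)) √(R ^ 2 - s ^ 2)) • g s := by
        refine (setIntegral_eq_integral_of_forall_compl_eq_zero fun s hs => ?_).symm
        rw [hslice_null s hs, zero_smul]
    _ = _ := by
        rw [integral_of_le (by linarith), integral_Ioc_eq_integral_Ioo]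
        refine setIntegral_congr_fun measurableSet_Ioo fun s hs => ?_
        have hpos : 0 < R ^ 2 - s ^ 2 := by nlinarith [hs.1, hs.2]
        rw [EuclideanSpace.measureReal_ball _ _ (Real.sqrt_pos.2 hpos), Real.sqrt_eq_rpow,
          ← Real.rpow_natCast, ← Real.rpow_mul hpos.le]
        ring_nf

/-- If `n ≥ 3` and `f : ℝ → ℂ` is continuous, then for every `R > 0`,
`∫_{B(0,R)} f(xₙ) dx = ω_{n-1} ∫₀^R ρ ∫_{-ρ}^{ρ} f(s) (ρ² − s²)^{(n−3)/2} ds dρ`. -/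
theorem volume_integral_of_lastCoord (n : ℕ) (hn : 3 ≤ n) (f : ℝ → ℂ)
    (hf : Continuous f) (R : ℝ) (hR : 0 < R) :
    ∫ x in ball (0 : EuclideanSpace ℝ (Fin n)) R, f (x ⟨n - 1, by omega⟩) =
      (sphereArea (n - 1) : ℂ) *
        ∫ ρ in (0 : ℝ)..R, (ρ : ℂ) *
          ∫ s in (-ρ)..ρ,
            f s * (((ρ ^ 2 - s ^ 2) ^ (((n : ℝ) - 3) / 2) : ℝ) : ℂ) := by
  obtain ⟨m, rfl⟩ : ∃ m, n = m + 1 := ⟨n - 1, by omega⟩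
  have hm : (m : ℂ) ≠ 0 := by exact_mod_cast (by omega : m ≠ 0)
  have hβ : 0 ≤ (((m + 1 : ℕ) : ℝ) - 3) / 2 := by
    have : (2 : ℝ) ≤ m := by exact_mod_cast (by omega : 2 ≤ m)
    push_cast
    linarith
  have hexp : (((m + 1 : ℕ) : ℝ) - 3) / 2 + 1 = m / 2 := by push_cast; ring
  rw [integral_mul_integral_mul_sq_sub_sq_rpow hf hβ hR.le, hexp,
    ← intervalIntegral.integral_const_mul]
  simp only [Nat.add_sub_cancel]
  refine (integral_ball_comp_last m hf hR.le).trans (integral_congr fun s _ => ?_)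
  simp only [sphereArea, Complex.real_smul]
  push_cast
  field_simp
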